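/- arXiv:1809.09355 — 2 statements merged into one kernel-verified Lean document; each statement's English description precedes it below -/
import Mathlib

section
/- Let q : ℝ → ℝ be a polynomial of degree at most 5, h > 0, and let Q(x) := (1/h)·∫_{x−h/2}^{x+h/2} q. Then (1/(8h²))·(−Q(x−2h) + 12·Q(x−h) − 22·Q(x) + 12·Q(x+h) − Q(x+2h)) = q''(x). -/
/-!
Both sides of the identity are linear in `q`, so it suffices to check it on the monomials
`X ^ k`, `k ≤ 5`, which span the polynomials of degree at most `5`; for each of them the cell
averages are explicit polynomials in `x` and `h`, and the identity is a finite computation.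
-/

open Polynomial MeasureTheory

noncomputable section

def cellAverage (h : ℝ) (f : ℝ → ℝ) (x : ℝ) : ℝ :=
  (1 / h) * ∫ t in (x - h / 2)..(x + h / 2), f t

def secondDerivStencil (h : ℝ) (F : ℝ → ℝ) (x : ℝ) : ℝ :=
  (1 / (8 * h ^ 2)) * (-F (x - 2 * h) + 12 * F (x - h) - 22 * F x + 12 * F (x + h) - F (x + 2 * h))

theorem cellAverage_eval_add (h : ℝ) (p q : ℝ[X]) (x : ℝ) :
    cellAverage h (p + q).eval x = cellAverage h p.eval x + cellAverage h q.eval x := by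
  simp only [cellAverage, eval_add]
  rw [intervalIntegral.integral_add (p.continuous.intervalIntegrable _ _)
    (q.continuous.intervalIntegrable _ _), mul_add]

theorem cellAverage_eval_smul (h c : ℝ) (q : ℝ[X]) (x : ℝ) :
    cellAverage h (c • q).eval x = c * cellAverage h q.eval x := by
  simp only [cellAverage, eval_smul, smul_eq_mul, intervalIntegral.integral_const_mul]
  ring

def stencilOfCellAverages (h x : ℝ) : ℝ[X] →ₗ[ℝ] ℝ where
  toFun q := secondDerivStencil h (cellAverage h q.eval) x
  map_add' p q := by
    simp only [secondDerivStencil, cellAverage_eval_add]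
    ring
  map_smul' c q := by
    simp only [secondDerivStencil, cellAverage_eval_smul, RingHom.id_apply, smul_eq_mul]
    ring

def evalSecondDeriv (x : ℝ) : ℝ[X] →ₗ[ℝ] ℝ :=
  (leval x).comp (derivative ^ 2)

theorem stencilOfCellAverages_X_pow {h : ℝ} (hh : h ≠ 0) (x : ℝ) {k : ℕ} (hk : k ≤ 5) :
    stencilOfCellAverages h x (X ^ k) = evalSecondDeriv x (X ^ k) := by
  simp only [stencilOfCellAverages, evalSecondDeriv, LinearMap.coe_mk, AddHom.coe_mk,
    secondDerivStencil, cellAverage, eval_pow, eval_X, integral_pow, LinearMap.coe_comp,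
    Function.comp_apply, leval_apply, Module.End.pow_apply]
  interval_cases k <;> simp [hh] <;> field_simp <;> ring

theorem stencilOfCellAverages_eq_evalSecondDeriv {h : ℝ} (hh : h ≠ 0) (x : ℝ) {q : ℝ[X]}
    (hq : q.natDegree ≤ 5) : stencilOfCellAverages h x q = evalSecondDeriv x q := by
  classical
  have hmem : q ∈ degreeLE ℝ ((5 : ℕ) : WithBot ℕ) :=
    mem_degreeLE.2 (natDegree_le_iff_degree_le.1 hq)
  rw [degreeLE_eq_span_X_pow] at hmem
  refine LinearMap.eqOn_span' (fun p hp => ?_) hmem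
  obtain ⟨k, hk, rfl⟩ := Finset.mem_image.1 hp
  exact stencilOfCellAverages_X_pow hh x (Nat.lt_succ_iff.1 (Finset.mem_range.1 hk))

end

theorem stmt_7 (q : Polynomial ℝ) (hq : q.natDegree ≤ 5) (h : ℝ) (hh : 0 < h)
    (Q : ℝ → ℝ) (hQ : Q = fun x => (1 / h) * ∫ t in (x - h / 2)..(x + h / 2), q.eval t)
    (x : ℝ) :
    (1 / (8 * h ^ 2)) *
        (-Q (x - 2 * h) + 12 * Q (x - h) - 22 * Q x + 12 * Q (x + h) - Q (x + 2 * h)) =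
      (Polynomial.derivative^[2] q).eval x := by
  subst hQ
  exact stencilOfCellAverages_eq_evalSecondDeriv hh.ne' x hq
end

section
/- For a C⁶ function q : ℝ → ℝ and fixed x₀, the point-to-average formula error satisfies: letting Q(x₀) := (1/h)·∫_{x₀−h/2}^{x₀+h/2} q, the quantity q(x₀) + (1/5760)·(−17q(x₀−2h) + 308q(x₀−h) − 582q(x₀) + 308q(x₀+h) − 17q(x₀+2h)) − Q(x₀) is O(h⁶) as h → 0⁺. -/
open MeasureTheory Asymptotics Filter

/-!
Write `q = P + r` with `P` the Taylor polynomial of degree 5 of `q` at `x₀`, so that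
`r x = O((x - x₀)^6)`. The stencil is exact on polynomials of degree at most 5: odd powers cancel
by symmetry, and the weights reproduce the cell averages `1, h²/12, h⁴/80` of
`1, (x - x₀)², (x - x₀)⁴`.
Hence the error of `q` is the error of `r`, each of whose point values and cell average is
`O(h^6)`.
-/

open Set Topology Interval

theorem taylor_isBigO_univ {E : Type*} [NormedAddCommGroup E] [NormedSpace ℝ E]
    {f : ℝ → E} {x₀ : ℝ} {n : ℕ} (hf : ContDiff ℝ (n + 1) f) :
    (fun x ↦ f x - taylorWithinEval f n univ x₀ x) =O[𝓝 x₀] fun x ↦ (x - x₀) ^ (n + 1) := by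
  have hsucc : (fun x ↦ f x - taylorWithinEval f (n + 1) univ x₀ x) =O[𝓝 x₀]
      fun x ↦ (x - x₀) ^ (n + 1) :=
    (taylor_isLittleO_univ (n := n + 1) (by exact_mod_cast hf)).isBigO
  have hterm : (fun x ↦ (((n + 1 : ℝ) * n.factorial)⁻¹ * (x - x₀) ^ (n + 1)) •
      iteratedDerivWithin (n + 1) f univ x₀) =O[𝓝 x₀] fun x ↦ (x - x₀) ^ (n + 1) :=
    IsBigO.of_bound (‖((n + 1 : ℝ) * n.factorial)⁻¹‖ * ‖iteratedDerivWithin (n + 1) f univ x₀‖)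
      (Eventually.of_forall fun x ↦ by rw [norm_smul, norm_mul]; linarith)
  exact (hsucc.add hterm).congr_left fun x ↦ by rw [taylorWithinEval_succ]; abel

theorem intervalAverage_isBigO {r : ℝ → ℝ} {x₀ : ℝ} {n : ℕ}
    (hr : r =O[𝓝 x₀] fun x ↦ (x - x₀) ^ n) :
    (fun h ↦ (1 / h) * ∫ t in (x₀ - h / 2)..(x₀ + h / 2), r t) =O[𝓝[>] 0] fun h ↦ h ^ n := by
  obtain ⟨C, hC, hCr⟩ := hr.exists_nonneg
  obtain ⟨ε, hε, hball⟩ := Metric.eventually_nhds_iff.mp hCr.bound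
  refine IsBigO.of_bound C ?_
  filter_upwards [Ioo_mem_nhdsGT hε] with h ⟨hpos, hlt⟩
  have hpt : ∀ t ∈ Ι (x₀ - h / 2) (x₀ + h / 2), ‖r t‖ ≤ C * h ^ n := by
    intro t ht
    rw [uIoc_of_le (by linarith)] at ht
    have hdist : |t - x₀| ≤ h := abs_le.mpr ⟨by linarith [ht.1], by linarith [ht.2]⟩
    calc ‖r t‖ ≤ C * ‖(t - x₀) ^ n‖ := hball (by rw [Real.dist_eq]; linarith)
      _ ≤ C * h ^ n := by
        rw [norm_pow, Real.norm_eq_abs]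
        gcongr
  have hint := intervalIntegral.norm_integral_le_of_norm_le_const hpt
  rw [show x₀ + h / 2 - (x₀ - h / 2) = h by ring, abs_of_pos hpos] at hint
  rw [norm_mul, norm_pow, Real.norm_eq_abs h, abs_of_pos hpos, norm_div, norm_one,
    Real.norm_eq_abs, abs_of_pos hpos]
  calc 1 / h * ‖∫ t in (x₀ - h / 2)..(x₀ + h / 2), r t‖ ≤ 1 / h * (C * h ^ n * h) := by gcongr
    _ = C * h ^ n := by field_simp

theorem isBigO_comp_add_mul {r : ℝ → ℝ} {x₀ : ℝ} {n : ℕ}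
    (hr : r =O[𝓝 x₀] fun x ↦ (x - x₀) ^ n) (a : ℝ) :
    (fun h ↦ r (x₀ + a * h)) =O[𝓝 0] fun h ↦ h ^ n := by
  have hlim : Tendsto (fun h : ℝ ↦ x₀ + a * h) (𝓝 0) (𝓝 x₀) := by
    simpa using (by fun_prop : Continuous fun h : ℝ ↦ x₀ + a * h).tendsto 0
  refine (hr.comp_tendsto hlim).trans <|
    ((isBigO_refl (fun h : ℝ ↦ h ^ n) _).const_mul_left (a ^ n)).congr_left fun h ↦ ?_
  simp only [Function.comp_apply, add_sub_cancel_left, mul_pow]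

noncomputable def pointToAverageError (f : ℝ → ℝ) (x₀ h : ℝ) : ℝ :=
  f x₀ + (1 / 5760) * (-17 * f (x₀ - 2 * h) + 308 * f (x₀ - h) - 582 * f x₀
    + 308 * f (x₀ + h) - 17 * f (x₀ + 2 * h))
    - (1 / h) * ∫ t in (x₀ - h / 2)..(x₀ + h / 2), f t

theorem pointToAverageError_add {f g : ℝ → ℝ} {x₀ h : ℝ}
    (hf : IntervalIntegrable f volume (x₀ - h / 2) (x₀ + h / 2))
    (hg : IntervalIntegrable g volume (x₀ - h / 2) (x₀ + h / 2)) :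
    pointToAverageError (f + g) x₀ h = pointToAverageError f x₀ h + pointToAverageError g x₀ h := by
  simp only [pointToAverageError, Pi.add_apply, intervalIntegral.integral_add hf hg]
  ring

theorem pointToAverageError_polynomial_eq_zero (c : ℕ → ℝ) (x₀ : ℝ) {h : ℝ} (hh : h ≠ 0) :
    pointToAverageError (fun x ↦ ∑ k ∈ Finset.range 6, c k * (x - x₀) ^ k) x₀ h = 0 := by
  have hmonomial (k : ℕ) : ∫ x in (x₀ - h / 2)..(x₀ + h / 2), (x - x₀) ^ k
      = ((h / 2) ^ (k + 1) - (-(h / 2)) ^ (k + 1)) / (k + 1) := by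
    rw [intervalIntegral.integral_comp_sub_right (fun x ↦ x ^ k), integral_pow]
    ring_nf
  rw [pointToAverageError, intervalIntegral.integral_finsetSum
    fun k _ ↦ (by fun_prop : Continuous fun x ↦ c k * (x - x₀) ^ k).intervalIntegrable _ _]
  simp only [intervalIntegral.integral_const_mul, hmonomial, Finset.sum_range_succ,
    Finset.sum_range_zero]
  field_simp
  ring

theorem pointToAverageError_isBigO {r : ℝ → ℝ} {x₀ : ℝ}
    (hr : r =O[𝓝 x₀] fun x ↦ (x - x₀) ^ 6) :
    pointToAverageError r x₀ =O[𝓝[>] 0] fun h ↦ h ^ 6 := by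
  have hr₀ : r x₀ = 0 := hr.eq_zero_imp.self_of_nhds (by simp)
  have hpt (a : ℝ) : (fun h ↦ r (x₀ + a * h)) =O[𝓝[>] 0] fun h ↦ h ^ 6 :=
    (isBigO_comp_add_mul hr a).mono nhdsWithin_le_nhds
  refine ((((((hpt (-2)).const_mul_left (-17)).add ((hpt (-1)).const_mul_left 308)).add
    ((hpt 1).const_mul_left 308)).sub ((hpt 2).const_mul_left 17)).const_mul_left (1 / 5760)
    |>.sub (intervalAverage_isBigO hr)).congr_left fun h ↦ ?_
  simp only [pointToAverageError, hr₀]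
  ring_nf

theorem stmt_12 (q : ℝ → ℝ) (hq : ContDiff ℝ 6 q) (x₀ : ℝ)
    (Q : ℝ → ℝ)
    (hQ : Q = fun h => (1 / h) * ∫ t in (x₀ - h / 2)..(x₀ + h / 2), q t) :
    (fun h : ℝ =>
        q x₀
          + (1 / 5760) * (-17 * q (x₀ - 2 * h) + 308 * q (x₀ - h) - 582 * q x₀
            + 308 * q (x₀ + h) - 17 * q (x₀ + 2 * h))
          - Q h) =O[nhdsWithin 0 (Set.Ioi 0)] (fun h : ℝ => h ^ 6) := by
  subst hQ
  set P := taylorWithinEval q 5 univ x₀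
  have hP : P = fun x ↦ ∑ k ∈ Finset.range 6,
      (k.factorial : ℝ)⁻¹ * iteratedDerivWithin k q univ x₀ * (x - x₀) ^ k := by
    ext x
    simp only [P, taylor_within_apply, smul_eq_mul]
    exact Finset.sum_congr rfl fun k _ ↦ by ring
  have hPcont : Continuous P := hP ▸ by fun_prop
  have hsplit : ∀ h ≠ 0, pointToAverageError q x₀ h = pointToAverageError (q - P) x₀ h := by
    intro h hh
    rw [← congrArg (pointToAverageError · x₀ h) (add_sub_cancel P q),
      pointToAverageError_add (hPcont.intervalIntegrable _ _)
        ((hq.continuous.sub hPcont).intervalIntegrable _ _), hP,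
      pointToAverageError_polynomial_eq_zero _ _ hh, zero_add]
  exact (pointToAverageError_isBigO (taylor_isBigO_univ (n := 5) hq)).congr'
    (eventually_mem_nhdsWithin.mono fun h hh ↦ (hsplit h (ne_of_gt hh)).symm) EventuallyEq.rfl
end
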